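/- arXiv:1901.01840 — 3 statements merged into one kernel-verified Lean document; each statement's English description precedes it below -/
import Mathlib

section
/- Let p and q be real numbers with p > 0, q > 0 and p ≠ q, let n be a natural number, and let u, v be real numbers. Then [u+v]_{n,p,q} = Σ_{κ=0}^{n} C_{p,q}(n,κ) · p^{(n−κ)(u−κ)} · q^{κ(v−n+κ)} · [u]_{κ,p,q} · [v]_{n−κ,p,q}. -/
/-- The (p,q)-deformed number `[x]_{p,q} = (p^x - q^x)/(p - q)` (real powers). -/
noncomputable def pqNum (p q x : ℝ) : ℝ := (p ^ x - q ^ x) / (p - q)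

/-- The (p,q)-factorial `[n]_{p,q}! = ∏_{i=1}^n [i]_{p,q}`. -/
noncomputable def pqFac (p q : ℝ) (n : ℕ) : ℝ := ∏ i ∈ Finset.range n, pqNum p q ((i : ℝ) + 1)

/-- The j-th order (p,q)-factorial `[x]_{j,p,q} = ∏_{v=0}^{j-1} [x-v]_{p,q}`. -/
noncomputable def pqFacOrd (p q x : ℝ) (j : ℕ) : ℝ := ∏ v ∈ Finset.range j, pqNum p q (x - (v : ℝ))

/-- The (p,q)-binomial coefficient `C_{p,q}(n,κ)`. -/
noncomputable def pqBinom (p q : ℝ) (n k : ℕ) : ℝ := pqFac p q n / (pqFac p q k * pqFac p q (n - k))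

/-- Addition law: `[a+b] = p^a [b] + q^b [a]`. -/
lemma pqNum_add (p q : ℝ) (hp : 0 < p) (hq : 0 < q) (a b : ℝ) :
    pqNum p q (a + b) = p ^ a * pqNum p q b + q ^ b * pqNum p q a := by
  unfold pqNum
  rw [Real.rpow_add hp, Real.rpow_add hq]
  ring

lemma pqNum_ne_zero (p q : ℝ) (hp : 0 < p) (hq : 0 < q) (hpq : p ≠ q) (x : ℝ) (hx : x ≠ 0) :
    pqNum p q x ≠ 0 := by
  unfold pqNum
  apply div_ne_zero
  · intro h
    have h' : p ^ x = q ^ x := sub_eq_zero.mp h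
    have hlog : x * Real.log p = x * Real.log q := by
      rw [← Real.log_rpow hp, ← Real.log_rpow hq, h']
    have hl := mul_left_cancel₀ hx hlog
    exact hpq (by rw [← Real.exp_log hp, ← Real.exp_log hq, hl])
  · exact sub_ne_zero.mpr hpq

lemma pqFac_ne_zero (p q : ℝ) (hp : 0 < p) (hq : 0 < q) (hpq : p ≠ q) (n : ℕ) :
    pqFac p q n ≠ 0 := by
  unfold pqFac
  apply Finset.prod_ne_zero_iff.mpr
  intro i _
  exact pqNum_ne_zero p q hp hq hpq _ (by positivity)

lemma pqFac_succ (p q : ℝ) (n : ℕ) :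
    pqFac p q (n + 1) = pqFac p q n * pqNum p q ((n : ℝ) + 1) :=
  Finset.prod_range_succ _ _

lemma pqFacOrd_succ (p q x : ℝ) (j : ℕ) :
    pqFacOrd p q x (j + 1) = pqFacOrd p q x j * pqNum p q (x - (j : ℝ)) :=
  Finset.prod_range_succ _ _

lemma pqFac_zero (p q : ℝ) : pqFac p q 0 = 1 := Finset.prod_range_zero _

lemma pqBinom_zero (p q : ℝ) (hp : 0 < p) (hq : 0 < q) (hpq : p ≠ q) (n : ℕ) :
    pqBinom p q n 0 = 1 := by
  unfold pqBinom
  rw [pqFac_zero, one_mul, Nat.sub_zero, div_self (pqFac_ne_zero p q hp hq hpq n)]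

lemma pqBinom_self (p q : ℝ) (hp : 0 < p) (hq : 0 < q) (hpq : p ≠ q) (n : ℕ) :
    pqBinom p q n n = 1 := by
  unfold pqBinom
  rw [Nat.sub_self, pqFac_zero, mul_one, div_self (pqFac_ne_zero p q hp hq hpq n)]

/-- The (p,q)-Pascal rule. -/
lemma pqBinom_pascal (p q : ℝ) (hp : 0 < p) (hq : 0 < q) (hpq : p ≠ q) {n k : ℕ} (hk : k < n) :
    pqBinom p q (n + 1) (k + 1) =
      q ^ ((k : ℝ) + 1) * pqBinom p q n (k + 1) +
        p ^ ((n : ℝ) - (k : ℝ)) * pqBinom p q n k := by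
  have hcast : (((n - k - 1 : ℕ) : ℝ)) + 1 = (n : ℝ) - (k : ℝ) := by
    have h1 : (1:ℕ) ≤ n - k := Nat.le_sub_of_add_le (by omega)
    push_cast [Nat.cast_sub hk.le, Nat.cast_sub h1]
    ring
  have hnk : n - k = (n - k - 1) + 1 := by omega
  have hC := pqFac_succ p q (n - k - 1)
  rw [← hnk, hcast] at hC
  have key := pqNum_add p q hp hq ((n : ℝ) - (k : ℝ)) ((k : ℝ) + 1)
  rw [show (n:ℝ) - (k:ℝ) + ((k:ℝ) + 1) = (n:ℝ) + 1 by ring] at key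
  have e1 : (n + 1) - (k + 1) = n - k := by omega
  have e2 : n - (k + 1) = n - k - 1 := by omega
  have h1 := pqFac_ne_zero p q hp hq hpq k
  have h2 := pqNum_ne_zero p q hp hq hpq ((k:ℝ)+1) (by positivity)
  have h3 := pqFac_ne_zero p q hp hq hpq (n - k - 1)
  have h4 : pqNum p q ((n:ℝ) - (k:ℝ)) ≠ 0 := by
    apply pqNum_ne_zero p q hp hq hpq
    have : (k:ℝ) < n := by exact_mod_cast hk
    intro h; nlinarith
  unfold pqBinom
  rw [e1, e2, pqFac_succ p q n, pqFac_succ p q k, hC, key]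
  field_simp
  ring

/-- The binomial-free part of the summand. -/
noncomputable def pqCore (p q u v : ℝ) (n κ : ℕ) : ℝ :=
  p ^ (((n : ℝ) - (κ : ℝ)) * (u - (κ : ℝ))) * q ^ ((κ : ℝ) * (v - (n : ℝ) + (κ : ℝ)))
    * pqFacOrd p q u κ * pqFacOrd p q v (n - κ)

/-- Splitting a summand via the addition law. -/
lemma pq_split (p q : ℝ) (hp : 0 < p) (hq : 0 < q) (u v : ℝ) {n κ : ℕ} (hκ : κ ≤ n) :
    pqCore p q u v n κ * pqNum p q (u + v - (n : ℝ)) =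
      q ^ ((κ : ℝ)) * pqCore p q u v (n + 1) κ
      + p ^ ((n : ℝ) - (κ : ℝ)) * pqCore p q u v (n + 1) (κ + 1) := by
  have e1 : (n + 1) - κ = (n - κ) + 1 := by omega
  have e2 : (n + 1) - (κ + 1) = n - κ := by omega
  have hc : ((n - κ : ℕ) : ℝ) = (n : ℝ) - (κ : ℝ) := Nat.cast_sub hκ
  have key := pqNum_add p q hp hq (u - (κ : ℝ)) (v - ((n : ℝ) - (κ : ℝ)))
  rw [show u - (κ:ℝ) + (v - ((n:ℝ) - (κ:ℝ))) = u + v - (n:ℝ) by ring] at key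
  unfold pqCore
  rw [e1, e2, pqFacOrd_succ, pqFacOrd_succ, hc, key]
  push_cast
  have h1 : p ^ (((n:ℝ) + 1 - (κ:ℝ)) * (u - (κ:ℝ))) =
      p ^ (((n:ℝ) - (κ:ℝ)) * (u - (κ:ℝ))) * p ^ (u - (κ:ℝ)) := by
    rw [← Real.rpow_add hp]; ring_nf
  have h3 : p ^ (((n:ℝ) - (κ:ℝ)) * (u - (κ:ℝ))) =
      p ^ ((n:ℝ) - (κ:ℝ)) * p ^ (((n:ℝ) + 1 - ((κ:ℝ) + 1)) * (u - ((κ:ℝ) + 1))) := by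
    rw [← Real.rpow_add hp]; ring_nf
  have h4 : q ^ (((κ:ℝ) + 1) * (v - ((n:ℝ) + 1) + ((κ:ℝ) + 1))) =
      q ^ ((κ:ℝ) * (v - (n:ℝ) + (κ:ℝ))) * q ^ (v - (n:ℝ) + (κ:ℝ)) := by
    rw [← Real.rpow_add hq]; ring_nf
  have h2 : q ^ ((κ:ℝ) * (v - (n:ℝ) + (κ:ℝ))) =
      q ^ ((κ:ℝ)) * q ^ ((κ:ℝ) * (v - ((n:ℝ) + 1) + (κ:ℝ))) := by
    rw [← Real.rpow_add hq]; ring_nf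
  rw [h1, h4, h3, h2]
  ring

/-- The (p,q)-deformed Vandermonde formula. -/
theorem pq_vandermonde_second (p q : ℝ) (hp : 0 < p) (hq : 0 < q) (hpq : p ≠ q)
    (n : ℕ) (u v : ℝ) :
    pqFacOrd p q (u + v) n =
      ∑ κ ∈ Finset.range (n + 1),
        pqBinom p q n κ * p ^ (((n : ℝ) - (κ : ℝ)) * (u - (κ : ℝ)))
          * q ^ ((κ : ℝ) * (v - (n : ℝ) + (κ : ℝ)))
          * pqFacOrd p q u κ * pqFacOrd p q v (n - κ) := by
  have key : ∀ n : ℕ, pqFacOrd p q (u + v) n =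
      ∑ κ ∈ Finset.range (n + 1), pqBinom p q n κ * pqCore p q u v n κ := by
    intro n
    induction n with
    | zero => simp [pqFacOrd, pqCore, pqBinom_zero p q hp hq hpq]
    | succ n ih =>
      rw [pqFacOrd_succ, ih, Finset.sum_mul]
      have step : ∀ κ ∈ Finset.range (n + 1),
          pqBinom p q n κ * pqCore p q u v n κ * pqNum p q (u + v - (n : ℝ)) =
            q ^ ((κ : ℝ)) * pqBinom p q n κ * pqCore p q u v (n + 1) κ
            + p ^ ((n : ℝ) - (κ : ℝ)) * pqBinom p q n κ * pqCore p q u v (n + 1) (κ + 1) := by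
        intro κ hκ
        rw [mul_assoc, pq_split p q hp hq u v (Finset.mem_range_succ_iff.mp hκ)]
        ring
      rw [Finset.sum_congr rfl step, Finset.sum_add_distrib]
      rw [Finset.sum_range_succ'
            (fun κ => q ^ ((κ : ℝ)) * pqBinom p q n κ * pqCore p q u v (n + 1) κ) n,
          Finset.sum_range_succ
            (fun κ => p ^ ((n : ℝ) - (κ : ℝ)) * pqBinom p q n κ * pqCore p q u v (n + 1) (κ + 1)) n,
          Finset.sum_range_succ'
            (fun κ => pqBinom p q (n + 1) κ * pqCore p q u v (n + 1) κ) (n + 1),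
          Finset.sum_range_succ
            (fun κ => pqBinom p q (n + 1) (κ + 1) * pqCore p q u v (n + 1) (κ + 1)) n]
      have mid : ∀ κ ∈ Finset.range n,
          pqBinom p q (n + 1) (κ + 1) * pqCore p q u v (n + 1) (κ + 1) =
            q ^ (((κ + 1 : ℕ) : ℝ)) * pqBinom p q n (κ + 1) * pqCore p q u v (n + 1) (κ + 1)
            + p ^ ((n : ℝ) - (κ : ℝ)) * pqBinom p q n κ * pqCore p q u v (n + 1) (κ + 1) := by
        intro κ hκ
        rw [pqBinom_pascal p q hp hq hpq (Finset.mem_range.mp hκ)]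
        push_cast
        ring
      rw [Finset.sum_congr rfl mid, Finset.sum_add_distrib]
      simp only [pqBinom_zero p q hp hq hpq, pqBinom_self p q hp hq hpq, Nat.cast_zero,
        Real.rpow_zero, Nat.cast_succ, sub_self]
      ring
  rw [key n]
  exact Finset.sum_congr rfl fun κ _ => by unfold pqCore; ring
end

section
/- Let p and q be real numbers with p > 0, q > 0 and p ≠ q, and let n, κ be natural numbers. Then the (p,q)-binomial coefficient with negative upper argument satisfies C_{p,q}(−n,κ) = (−1)^κ · (pq)^{−nκ−κ(κ−1)/2} · C_{p,q}(n+κ−1,κ). -/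
/-- The (p,q)-binomial coefficient with real upper argument: `C_{p,q}(x,κ) = [x]_{κ,p,q}/[κ]_{p,q}!`. -/
noncomputable def pqBinomR (p q x : ℝ) (k : ℕ) : ℝ := pqFacOrd p q x k / pqFac p q k

/-!
Since `p^{-x} - q^{-x} = -(pq)^{-x} (p^x - q^x)`, each factor `[-n-v]_{p,q}` of `[-n]_{κ,p,q}`
equals `-(pq)^{-(n+v)} [n+v]_{p,q}`. Multiplying over `v < κ` gives the sign `(-1)^κ`, the power
`(pq)^{-nκ-κ(κ-1)/2}` and the rising product `∏_{v<κ} [n+v]_{p,q}`, which read backwards is the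
falling product `[n+κ-1]_{κ,p,q}`; so the identity already holds between the numerators.
-/

open Finset

lemma pqNum_neg {p q : ℝ} (hp : 0 < p) (hq : 0 < q) (x : ℝ) :
    pqNum p q (-x) = -(p * q) ^ (-x) * pqNum p q x := by
  have hpx : p ^ x ≠ 0 := (Real.rpow_pos_of_pos hp x).ne'
  have hqx : q ^ x ≠ 0 := (Real.rpow_pos_of_pos hq x).ne'
  unfold pqNum
  rw [Real.rpow_neg hp.le, Real.rpow_neg hq.le, Real.rpow_neg (mul_pos hp hq).le,
    Real.mul_rpow hp.le hq.le]
  field_simp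
  ring

lemma pqFacOrd_add_sub_one (p q x : ℝ) (k : ℕ) :
    pqFacOrd p q (x + k - 1) k = ∏ v ∈ range k, pqNum p q (x + v) := by
  rw [pqFacOrd, ← prod_range_reflect (fun v : ℕ => pqNum p q (x + v))]
  refine prod_congr rfl fun v hv => ?_
  have hvk : 1 + v ≤ k := by rw [add_comm]; exact mem_range.mp hv
  rw [Nat.sub_sub, Nat.cast_sub hvk]
  push_cast
  ring_nf

lemma sum_range_neg_add (x : ℝ) (k : ℕ) :
    ∑ v ∈ range k, -(x + v) = -(x * k) - k * (k - 1) / 2 := by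
  induction k with
  | zero => simp
  | succ k ih => rw [sum_range_succ, ih]; push_cast; ring

lemma pqFacOrd_neg {p q : ℝ} (hp : 0 < p) (hq : 0 < q) (x : ℝ) (k : ℕ) :
    pqFacOrd p q (-x) k =
      (-1) ^ k * (p * q) ^ (-(x * k) - k * (k - 1) / 2) * pqFacOrd p q (x + k - 1) k := by
  calc pqFacOrd p q (-x) k
      = ∏ v ∈ range k, (-1 * (p * q) ^ (-(x + v)) * pqNum p q (x + v)) := by
        refine prod_congr rfl fun v _ => ?_
        rw [show -x - v = -(x + v) by ring, pqNum_neg hp hq, neg_one_mul]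
    _ = (-1) ^ k * (p * q) ^ (∑ v ∈ range k, -(x + v)) * ∏ v ∈ range k, pqNum p q (x + v) := by
        rw [prod_mul_distrib, prod_mul_distrib, prod_const, card_range,
          Real.rpow_sum_of_pos (mul_pos hp hq)]
    _ = _ := by rw [sum_range_neg_add, pqFacOrd_add_sub_one]

theorem pqBinomR_neg_general (p q : ℝ) (hp : 0 < p) (hq : 0 < q) (n κ : ℕ) :
    pqBinomR p q (-(n : ℝ)) κ =
      (-1 : ℝ) ^ κ * (p * q) ^ (-((n : ℝ) * (κ : ℝ)) - (κ : ℝ) * ((κ : ℝ) - 1) / 2)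
        * pqBinomR p q ((n : ℝ) + (κ : ℝ) - 1) κ := by
  rw [pqBinomR, pqBinomR, pqFacOrd_neg hp hq, mul_div_assoc]

/-- `C_{p,q}(-n,κ) = (-1)^κ (pq)^{-nκ-κ(κ-1)/2} C_{p,q}(n+κ-1,κ)`. -/
theorem pqBinomR_neg (p q : ℝ) (hp : 0 < p) (hq : 0 < q) (hpq : p ≠ q) (n κ : ℕ) :
    pqBinomR p q (-(n : ℝ)) κ =
      (-1 : ℝ) ^ κ * (p * q) ^ (-((n : ℝ) * (κ : ℝ)) - (κ : ℝ) * ((κ : ℝ) - 1) / 2)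
        * pqBinomR p q ((n : ℝ) + (κ : ℝ) - 1) κ :=
  pqBinomR_neg_general p q hp hq n κ
end

section
/- Let q be a real number with q > 0 and q ≠ 1, let n be a natural number, and let p₀ be a real number. Then the q-binomial distribution is normalized: Σ_{κ=0}^{n} C_q(n,κ) · p₀^κ · Π_{i=1}^{n−κ}(1 − p₀·q^{i−1}) = 1. -/
/-- The q-deformed number `[n]_q = (1 - q^n)/(1 - q)`. -/
noncomputable def qNum (q : ℝ) (n : ℕ) : ℝ := (1 - q ^ n) / (1 - q)

/-- The q-factorial `[n]_q! = ∏_{i=1}^n [i]_q`. -/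
noncomputable def qFac (q : ℝ) (n : ℕ) : ℝ := ∏ i ∈ Finset.range n, qNum q (i + 1)

/-- The q-binomial coefficient `C_q(n,κ)`. -/
noncomputable def qBinom (q : ℝ) (n k : ℕ) : ℝ := qFac q n / (qFac q k * qFac q (n - k))

lemma qpow_ne_one {q : ℝ} (hq : 0 < q) (hq1 : q ≠ 1) {m : ℕ} (hm : m ≠ 0) : q ^ m ≠ 1 := by
  rcases lt_or_gt_of_ne hq1 with h | h
  · exact ne_of_lt (pow_lt_one₀ hq.le h hm)
  · exact ne_of_gt (one_lt_pow₀ h hm)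

lemma qNum_ne_zero {q : ℝ} (hq : 0 < q) (hq1 : q ≠ 1) {m : ℕ} (hm : m ≠ 0) : qNum q m ≠ 0 :=
  div_ne_zero (sub_ne_zero.mpr (Ne.symm (qpow_ne_one hq hq1 hm)))
    (sub_ne_zero.mpr (Ne.symm hq1))

lemma qFac_ne_zero {q : ℝ} (hq : 0 < q) (hq1 : q ≠ 1) (n : ℕ) : qFac q n ≠ 0 :=
  Finset.prod_ne_zero_iff.mpr (fun i _ => qNum_ne_zero hq hq1 (Nat.succ_ne_zero i))

lemma qFac_succ (q : ℝ) (n : ℕ) : qFac q (n+1) = qFac q n * qNum q (n+1) :=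
  Finset.prod_range_succ _ _

lemma qNum_key {q : ℝ} (hq1 : q ≠ 1) {n k : ℕ} (hk : k < n) :
    qNum q (n+1) = qNum q (k+1) + q^(k+1) * qNum q (n-k) := by
  have h1 : (1:ℝ) - q ≠ 0 := sub_ne_zero.mpr (Ne.symm hq1)
  have hpow : q^k * q^(n-k) = q^n := by
    rw [← pow_add]; congr 1; omega
  unfold qNum
  field_simp
  linear_combination q * hpow

lemma qPascal {q : ℝ} (hq : 0 < q) (hq1 : q ≠ 1) {n k : ℕ} (hk : k < n) :
    qBinom q (n+1) (k+1) = qBinom q n k + q^(k+1) * qBinom q n (k+1) := by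
  have e1 : n + 1 - (k+1) = n - k := by omega
  have e2 : n - (k+1) = (n - k) - 1 := by omega
  have e3 : n - k = (n - (k+1)) + 1 := by omega
  unfold qBinom
  rw [e1, qFac_succ q n, qFac_succ q k, e3, qFac_succ q (n - (k+1)), ← e3,
    qNum_key hq1 hk]
  have hfn := qFac_ne_zero hq hq1 n
  have hfk := qFac_ne_zero hq hq1 k
  have hfnk := qFac_ne_zero hq hq1 (n - (k+1))
  have hn1 : qNum q (k+1) ≠ 0 := qNum_ne_zero hq hq1 (Nat.succ_ne_zero k)
  have hn2 : qNum q (n - (k+1) + 1) ≠ 0 := qNum_ne_zero hq hq1 (Nat.succ_ne_zero _)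
  rw [← e3] at hn2
  field_simp

lemma prod_split (p q : ℝ) (m : ℕ) :
    ∏ i ∈ Finset.range (m+1), (1 - p * q ^ i) =
    (1 - p) * ∏ i ∈ Finset.range m, (1 - (p*q) * q ^ i) := by
  rw [Finset.prod_range_succ']
  simp only [pow_zero, mul_one]
  rw [mul_comm]
  congr 1
  apply Finset.prod_congr rfl
  intro i _
  rw [pow_succ']
  ring

/-- Normalization of the q-binomial distribution. -/
theorem q_binomial_normalized (q : ℝ) (hq : 0 < q) (hq1 : q ≠ 1) (n : ℕ) (p₀ : ℝ) :
    ∑ κ ∈ Finset.range (n + 1),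
        qBinom q n κ * p₀ ^ κ * ∏ i ∈ Finset.range (n - κ), (1 - p₀ * q ^ i) = 1 := by
  induction n generalizing p₀ with
  | zero => simp [qBinom, qFac]
  | succ n ih =>
    have hfn1 := qFac_ne_zero hq hq1 (n+1)
    have hfn := qFac_ne_zero hq hq1 n
    have hq0 : qFac q 0 = 1 := Finset.prod_range_zero _
    have hB0 : ∀ m, qBinom q m 0 = 1 := by
      intro m
      unfold qBinom
      rw [Nat.sub_zero, hq0, one_mul, div_self (qFac_ne_zero hq hq1 m)]
    have hBs : ∀ m, qBinom q m m = 1 := by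
      intro m
      unfold qBinom
      rw [Nat.sub_self, hq0, mul_one, div_self (qFac_ne_zero hq hq1 m)]
    rw [Finset.sum_range_succ' _ (n+1), Finset.sum_range_succ]
    have e0 : qBinom q (n+1) 0 * p₀ ^ 0 * ∏ i ∈ Finset.range (n+1-0), (1 - p₀ * q ^ i)
        = (1 - p₀) * (qBinom q n 0 * (p₀*q) ^ 0 * ∏ i ∈ Finset.range (n-0), (1 - (p₀*q) * q ^ i)) := by
      simp only [Nat.sub_zero, pow_zero, mul_one, hB0, one_mul]
      exact prod_split p₀ q n
    have etop : qBinom q (n+1) (n+1) * p₀ ^ (n+1) * ∏ i ∈ Finset.range (n+1-(n+1)), (1 - p₀ * q ^ i)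
        = p₀ * (qBinom q n n * p₀ ^ n * ∏ i ∈ Finset.range (n-n), (1 - p₀ * q ^ i)) := by
      simp [hBs, pow_succ]
      ring
    have emid : ∀ κ ∈ Finset.range n,
        qBinom q (n+1) (κ+1) * p₀ ^ (κ+1) * ∏ i ∈ Finset.range (n+1-(κ+1)), (1 - p₀ * q ^ i)
        = p₀ * (qBinom q n κ * p₀ ^ κ * ∏ i ∈ Finset.range (n-κ), (1 - p₀ * q ^ i))
          + (1 - p₀) * (qBinom q n (κ+1) * (p₀*q) ^ (κ+1) *
              ∏ i ∈ Finset.range (n-(κ+1)), (1 - (p₀*q) * q ^ i)) := by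
      intro κ hκ
      rw [Finset.mem_range] at hκ
      have e1 : n + 1 - (κ+1) = (n - (κ+1)) + 1 := by omega
      have e2 : n - κ = (n - (κ+1)) + 1 := by omega
      rw [e1, prod_split, qPascal hq hq1 hκ, e2, prod_split]
      rw [mul_pow]
      ring
    rw [Finset.sum_congr rfl emid, e0, etop, Finset.sum_add_distrib]
    have expand1 : ∑ κ ∈ Finset.range n, p₀ * (qBinom q n κ * p₀ ^ κ * ∏ i ∈ Finset.range (n-κ), (1 - p₀ * q ^ i))
        + p₀ * (qBinom q n n * p₀ ^ n * ∏ i ∈ Finset.range (n-n), (1 - p₀ * q ^ i))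
        = p₀ * ∑ κ ∈ Finset.range (n+1), qBinom q n κ * p₀ ^ κ * ∏ i ∈ Finset.range (n-κ), (1 - p₀ * q ^ i) := by
      rw [Finset.sum_range_succ, mul_add, Finset.mul_sum]
    have expand2 : ∑ κ ∈ Finset.range n, (1 - p₀) * (qBinom q n (κ+1) * (p₀*q) ^ (κ+1) * ∏ i ∈ Finset.range (n-(κ+1)), (1 - (p₀*q) * q ^ i))
        + (1 - p₀) * (qBinom q n 0 * (p₀*q) ^ 0 * ∏ i ∈ Finset.range (n-0), (1 - (p₀*q) * q ^ i))
        = (1 - p₀) * ∑ κ ∈ Finset.range (n+1), qBinom q n κ * (p₀*q) ^ κ * ∏ i ∈ Finset.range (n-κ), (1 - (p₀*q) * q ^ i) := by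
      rw [Finset.sum_range_succ' _ n, mul_add, Finset.mul_sum]
    linear_combination expand1 + expand2 + p₀ * ih p₀ + (1 - p₀) * ih (p₀ * q)
end
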